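/- arXiv:2007.09200 — 3 statements merged into one kernel-verified Lean document; each statement's English description precedes it below -/
import Mathlib

section
/- Consider a two-layer linear-generative model: g(0) = W₁ᵀ(z₁ ⊙ g₁), g₁ = W₂ᵀ(z₂ ⊙ g₂), g₂ = W₃ᵀ y, with weights W₁ ∈ ℝ^{d₁×n}, W₂ ∈ ℝ^{d₂×d₁}, W₃ ∈ ℝ^{K×d₂}, binary gates z₁ ∈ {0,1}^{d₁}, z₂ ∈ {0,1}^{d₂}, label y ∈ ℝ^K, biases b₁ ∈ ℝ^{d₁}, b₂ ∈ ℝ^{d₂}. Define the feedforward quantities f₁ = W₁x + b₁, f₂ = W₂(z₁ ⊙ f₁) + b₂, and logits v = W₃(z₂ ⊙ f₂). Then for any x ∈ ℝ^n: ⟨g(0), x⟩ + ⟨b₁, z₁ ⊙ g₁⟩ + ⟨b₂, z₂ ⊙ g₂⟩ = ⟨y, v⟩. -/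
open Matrix

lemma dot_mul_shift {m : ℕ} (u v w : Fin m → ℝ) : (u * v) ⬝ᵥ w = v ⬝ᵥ (u * w) := by
  simp only [dotProduct, Pi.mul_apply]
  exact Finset.sum_congr rfl fun i _ => by ring

lemma dot_swap {m : ℕ} (z a b : Fin m → ℝ) : a ⬝ᵥ (z * b) = b ⬝ᵥ (z * a) := by
  simp only [dotProduct, Pi.mul_apply]
  exact Finset.sum_congr rfl fun i _ => by ring

theorem stmt6 (n d1 d2 K : ℕ)
    (W1 : Matrix (Fin d1) (Fin n) ℝ) (W2 : Matrix (Fin d2) (Fin d1) ℝ)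
    (W3 : Matrix (Fin K) (Fin d2) ℝ)
    (z1 b1 g1 : Fin d1 → ℝ) (z2 b2 g2 : Fin d2 → ℝ)
    (y : Fin K → ℝ) (x : Fin n → ℝ)
    (g0 : Fin n → ℝ) (f1 : Fin d1 → ℝ) (f2 : Fin d2 → ℝ) (v : Fin K → ℝ)
    (hz1 : ∀ i, z1 i = 0 ∨ z1 i = 1) (hz2 : ∀ i, z2 i = 0 ∨ z2 i = 1)
    (hg2 : g2 = W3ᵀ.mulVec y)
    (hg1 : g1 = W2ᵀ.mulVec (z2 * g2))
    (hg0 : g0 = W1ᵀ.mulVec (z1 * g1))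
    (hf1 : f1 = W1.mulVec x + b1)
    (hf2 : f2 = W2.mulVec (z1 * f1) + b2)
    (hv : v = W3.mulVec (z2 * f2)) :
    g0 ⬝ᵥ x + b1 ⬝ᵥ (z1 * g1) + b2 ⬝ᵥ (z2 * g2) = y ⬝ᵥ v := by
  have key : y ⬝ᵥ v = g0 ⬝ᵥ x + b1 ⬝ᵥ (z1 * g1) + b2 ⬝ᵥ (z2 * g2) := by
    calc y ⬝ᵥ v = W3.vecMul y ⬝ᵥ (z2 * f2) := by rw [hv, Matrix.dotProduct_mulVec]
    _ = g2 ⬝ᵥ (z2 * f2) := by rw [hg2, Matrix.mulVec_transpose]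
    _ = g2 ⬝ᵥ (z2 * W2.mulVec (z1 * f1)) + g2 ⬝ᵥ (z2 * b2) := by
        rw [hf2, mul_add, dotProduct_add]
    _ = (z2 * g2) ⬝ᵥ W2.mulVec (z1 * f1) + b2 ⬝ᵥ (z2 * g2) := by
        rw [← dot_mul_shift z2 g2, dot_swap z2 g2 b2]
    _ = g1 ⬝ᵥ (z1 * f1) + b2 ⬝ᵥ (z2 * g2) := by
        rw [Matrix.dotProduct_mulVec, ← Matrix.mulVec_transpose, ← hg1]
    _ = g1 ⬝ᵥ (z1 * W1.mulVec x) + g1 ⬝ᵥ (z1 * b1) + b2 ⬝ᵥ (z2 * g2) := by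
        rw [hf1, mul_add, dotProduct_add]
    _ = (z1 * g1) ⬝ᵥ W1.mulVec x + b1 ⬝ᵥ (z1 * g1) + b2 ⬝ᵥ (z2 * g2) := by
        rw [← dot_mul_shift z1 g1, dot_swap z1 g1 b1]
    _ = g0 ⬝ᵥ x + b1 ⬝ᵥ (z1 * g1) + b2 ⬝ᵥ (z2 * g2) := by
        rw [Matrix.dotProduct_mulVec, ← Matrix.mulVec_transpose, ← hg0]
  linarith [key]
end

section
/- In the setting of the previous two-layer linear-generative model, assume additionally: (a) ‖g(0)‖₂² = c₀ is constant over all (y, z); (b) the prior p(y) is uniform over K classes; (c) the latent normalization Σ_z exp(η(y,z)) = c₁ is constant in y, where η(y,z) = ⟨b₁, z₁⊙g₁⟩ + ⟨b₂, z₂⊙g₂⟩; and the generative model sets x | y,z ~ N(g(0), σ²I), p(z|y) = exp(η(y,z))/Σ_{z'} exp(η(y,z')). Then, when σ² = 1, the posterior p(y | x, z) over the K one-hot labels satisfies p(y|x,z) = Softmax(v)_y, where v is the feedforward logit vector. -/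
open Matrix

/-- Theorem 1 of the CNN-F paper (fully-connected instantiation, σ = 1):
under the constancy assumptions, the Bayes posterior over the K one-hot labels
of the deconvolutional generative model equals the softmax of the feedforward
logits. -/
theorem stmt7 (n d1 d2 K : ℕ) (hK : 0 < K)
    (W1 : Matrix (Fin d1) (Fin n) ℝ) (W2 : Matrix (Fin d2) (Fin d1) ℝ)
    (W3 : Matrix (Fin K) (Fin d2) ℝ)
    (b1 : Fin d1 → ℝ) (b2 : Fin d2 → ℝ) (x : Fin n → ℝ)
    (z1 : Fin d1 → ℝ) (z2 : Fin d2 → ℝ)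
    (hz1 : ∀ i, z1 i = 0 ∨ z1 i = 1) (hz2 : ∀ i, z2 i = 0 ∨ z2 i = 1)
    -- generative feedback quantities, as functions of the label and the gates
    (g2 : Fin K → Fin d2 → ℝ) (g1 : Fin K → (Fin d2 → ℝ) → Fin d1 → ℝ)
    (g0 : Fin K → (Fin d1 → ℝ) → (Fin d2 → ℝ) → Fin n → ℝ)
    (η : Fin K → (Fin d1 → ℝ) → (Fin d2 → ℝ) → ℝ)
    (hg2 : ∀ k, g2 k = W3ᵀ.mulVec (Pi.single k 1))
    (hg1 : ∀ k ζ2, g1 k ζ2 = W2ᵀ.mulVec (ζ2 * g2 k))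
    (hg0 : ∀ k ζ1 ζ2, g0 k ζ1 ζ2 = W1ᵀ.mulVec (ζ1 * g1 k ζ2))
    (hη : ∀ k ζ1 ζ2, η k ζ1 ζ2 = b1 ⬝ᵥ (ζ1 * g1 k ζ2) + b2 ⬝ᵥ (ζ2 * g2 k))
    -- (a) constant squared norm of the generated image, over all labels and gates
    (c0 : ℝ)
    (hc0 : ∀ (k : Fin K) (ζ1 : Fin d1 → ℝ) (ζ2 : Fin d2 → ℝ),
      (∀ i, ζ1 i = 0 ∨ ζ1 i = 1) → (∀ i, ζ2 i = 0 ∨ ζ2 i = 1) →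
      (∑ i, (g0 k ζ1 ζ2 i) ^ 2) = c0)
    -- (c) constant latent normalization factor, the same for every label
    (c1 : ℝ)
    (hc1 : ∀ k : Fin K,
      (∑ ζb1 : Fin d1 → Bool, ∑ ζb2 : Fin d2 → Bool,
        Real.exp (η k (fun i => if ζb1 i then 1 else 0)
          (fun i => if ζb2 i then 1 else 0))) = c1)
    -- feedforward quantities
    (f1 : Fin d1 → ℝ) (f2 : Fin d2 → ℝ) (v : Fin K → ℝ)
    (hf1 : f1 = W1.mulVec x + b1)
    (hf2 : f2 = W2.mulVec (z1 * f1) + b2)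
    (hv : v = W3.mulVec (z2 * f2))
    -- joint density p(x, y = k, z) with uniform prior p(y) = 1/K,
    -- p(z|y) = exp(η)/c1, and x | y,z ~ N(g0, I)  (σ = 1)
    (joint : Fin K → ℝ)
    (hjoint : ∀ k, joint k =
      (1 / K) * (Real.exp (η k z1 z2) / c1) *
        ((2 * Real.pi) ^ n)⁻¹.sqrt * Real.exp (-(∑ i, (x i - g0 k z1 z2 i) ^ 2) / 2)) :
    -- the posterior over labels equals the softmax of the feedforward logits
    ∀ k : Fin K, joint k / (∑ j, joint j) = Real.exp (v k) / ∑ j, Real.exp (v j) := by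

  -- auxiliary dot-product swap
  have swap : ∀ {m : ℕ} (a b c : Fin m → ℝ), a ⬝ᵥ (b * c) = (b * a) ⬝ᵥ c := by
    intro m a b c
    simp only [dotProduct, Pi.mul_apply]
    exact Finset.sum_congr rfl fun i _ => by ring
  -- key identity: ⟨x, g0⟩ + η = v k
  have key : ∀ k : Fin K, x ⬝ᵥ g0 k z1 z2 + η k z1 z2 = v k := by
    intro k
    have e2 : (z2 * f2) ⬝ᵥ g2 k = v k := by
      rw [hg2, Matrix.dotProduct_mulVec, Matrix.vecMul_transpose, hv]
      simp [dotProduct, Pi.single_apply, Finset.sum_ite_eq']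
    have e1 : (z1 * f1) ⬝ᵥ g1 k z2 + b2 ⬝ᵥ (z2 * g2 k) = v k := by
      rw [hg1, Matrix.dotProduct_mulVec, Matrix.vecMul_transpose,
        ← add_dotProduct, ← hf2, swap, e2]
    rw [hg0, hη k z1 z2, Matrix.dotProduct_mulVec, Matrix.vecMul_transpose,
      ← add_assoc, ← add_dotProduct, ← hf1, swap, e1]
  -- positivity of constants
  have hc1pos : 0 < c1 := by
    rw [← hc1 ⟨0, hK⟩]
    exact Finset.sum_pos (fun _ _ => Finset.sum_pos (fun _ _ => Real.exp_pos _)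
      Finset.univ_nonempty) Finset.univ_nonempty
  set A : ℝ := (1 / K) * (1 / c1) * ((2 * Real.pi) ^ n)⁻¹.sqrt *
      Real.exp (-((∑ i, x i ^ 2) + c0) / 2) with hA
  have hApos : 0 < A := by
    have hKpos : (0:ℝ) < K := by exact_mod_cast hK
    have h2 : (0:ℝ) < ((2 * Real.pi) ^ n)⁻¹ := by positivity
    have := Real.sqrt_pos.mpr h2
    rw [hA]; positivity
  have hjoint' : ∀ k, joint k = A * Real.exp (v k) := by
    intro k
    have expand : (∑ i, (x i - g0 k z1 z2 i) ^ 2)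
        = (∑ i, x i ^ 2) - 2 * (x ⬝ᵥ g0 k z1 z2) + c0 := by
      rw [← hc0 k z1 z2 hz1 hz2]
      simp only [dotProduct, Finset.mul_sum, ← Finset.sum_add_distrib,
        ← Finset.sum_sub_distrib]
      exact Finset.sum_congr rfl fun i _ => by ring
    have hsplit : Real.exp (-((∑ i, x i ^ 2) - 2 * (x ⬝ᵥ g0 k z1 z2) + c0) / 2)
        = Real.exp (-((∑ i, x i ^ 2) + c0) / 2) * Real.exp (x ⬝ᵥ g0 k z1 z2) := by
      rw [← Real.exp_add]; congr 1; ring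
    rw [hjoint k, expand, hsplit, ← key k, Real.exp_add, hA]
    field_simp
  intro k
  simp only [hjoint']
  rw [← Finset.mul_sum, mul_div_mul_left _ _ (ne_of_gt hApos)]
end

section
/- Let f, g, b ∈ ℝ^m and consider the function F(z) = ⟨g, z ⊙ f⟩ + ⟨b, z ⊙ g⟩ over z ∈ {0,1}^m. Then the coordinatewise maximizer is z*_i = 𝟙(g_i (f_i + b_i) ≥ 0), and when b = 0 this equals 𝟙(g_i f_i ≥ 0), which coincides with 𝟙(AdaReLU(f_i) ≥ 0 under feedback g_i) whenever f_i ≠ 0. -/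
/-- AdaReLU: ReLU(f) if the feedback g is nonnegative, ReLU(-f) otherwise. -/
noncomputable def adaReLU (f g : ℝ) : ℝ := if 0 ≤ g then max f 0 else max (-f) 0

open Matrix

theorem stmt9 (m : ℕ) (f g b : Fin m → ℝ) :
    let F : (Fin m → ℝ) → ℝ := fun z => g ⬝ᵥ (z * f) + b ⬝ᵥ (z * g)
    let zstar : Fin m → ℝ := fun i => if 0 ≤ g i * (f i + b i) then 1 else 0
    -- zstar is the (coordinatewise) maximizer over binary z
    (∀ z : Fin m → ℝ, (∀ i, z i = 0 ∨ z i = 1) → F z ≤ F zstar) ∧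
    -- when b = 0 the maximizer is the sign-matching indicator 𝟙(g_i f_i ≥ 0)
    (b = 0 → zstar = fun i => if 0 ≤ g i * f i then 1 else 0) ∧
    -- which coincides with the indicator of a strictly active AdaReLU whenever
    -- f_i ≠ 0 (and the feedback g_i is nonzero)
    (b = 0 → ∀ i, f i ≠ 0 → g i ≠ 0 →
      zstar i = if 0 < adaReLU (f i) (g i) then 1 else 0) := by
  intro F zstar
  refine ⟨?_, ?_, ?_⟩
  · intro z hz
    have hF : ∀ w : Fin m → ℝ, F w = ∑ i, w i * (g i * (f i + b i)) := by
      intro w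
      simp only [F, dotProduct, Pi.mul_apply]
      rw [← Finset.sum_add_distrib]
      congr 1; ext i; ring
    rw [hF, hF]
    apply Finset.sum_le_sum
    intro i _
    by_cases h : 0 ≤ g i * (f i + b i)
    · simp only [zstar, if_pos h]
      rcases hz i with h0 | h1
      · simpa [h0] using h
      · simp [h1]
    · simp only [zstar, if_neg h]
      push_neg at h
      rcases hz i with h0 | h1
      · simp [h0]
      · simp [h1]; linarith
  · intro hb
    funext i
    simp [zstar, hb]
  · intro hb i hf hg
    simp only [zstar, hb, Pi.zero_apply, add_zero, adaReLU]
    rcases lt_or_gt_of_ne hg with hgneg | hgpos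
    · simp only [if_neg (not_le.mpr hgneg)]
      rcases lt_or_gt_of_ne hf with hfneg | hfpos
      · rw [if_pos (by nlinarith),
          if_pos (by simpa using hfneg)]
      · rw [if_neg (by nlinarith), if_neg (by simp; linarith)]
    · simp only [if_pos hgpos.le]
      rcases lt_or_gt_of_ne hf with hfneg | hfpos
      · rw [if_neg (by nlinarith), if_neg (by simp [max_def, if_pos hfneg.le])]
      · rw [if_pos (by positivity), if_pos (by simpa using hfpos)]
end
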